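/- A standard interpretation I of the two-sorted signature σ₀ is a stable model of a set Γ of first-order sentences over σ₀ if and only if I↓ (the set of precomputed atoms satisfied by I) is a stable model of the set {F^prop : F ∈ Γ} of infinitary propositional formulas. -/
import Mathlib


/-! # mini-gringo and the two-sorted signature σ₀ -/

/-- Precomputed terms: numerals and symbolic constants. -/
inductive PTerm : Type
  | num : ℤ → PTerm
  | sym : String → PTerm
deriving DecidableEq

/-- A total order on precomputed terms such that `num m ≤ num n` iff `m ≤ n`. -/
def PTerm.le : PTerm → PTerm → Prop
  | .num m, .num n => m ≤ n
  | .num _, .sym _ => True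
  | .sym _, .num _ => False
  | .sym s, .sym t => s ≤ t

/-- Comparison symbols. -/
inductive CRel : Type
  | req | rne | rlt | rgt | rle | rge
deriving DecidableEq

def CRel.holds : CRel → PTerm → PTerm → Prop
  | .req, a, b => a = b
  | .rne, a, b => a ≠ b
  | .rlt, a, b => PTerm.le a b ∧ a ≠ b
  | .rgt, a, b => PTerm.le b a ∧ a ≠ b
  | .rle, a, b => PTerm.le a b
  | .rge, a, b => PTerm.le b a

/-- mini-gringo terms (with general variables represented by natural numbers). -/
inductive MGT : Type
  | pre : PTerm → MGT
  | var : ℕ → MGT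
  | abs : MGT → MGT
  | add : MGT → MGT → MGT
  | sub : MGT → MGT → MGT
  | mul : MGT → MGT → MGT
  | div : MGT → MGT → MGT
  | mod : MGT → MGT → MGT
  | intv : MGT → MGT → MGT

/-- Truncation toward zero, as performed by gringo. -/
def tdiv (m n : ℤ) : ℤ := Int.tdiv m n

/-- The set of values `[t]` of a (ground) term. -/
def MGT.vals : MGT → Set PTerm
  | .pre p => {p}
  | .var _ => ∅
  | .abs t => {q | ∃ n : ℤ, PTerm.num n ∈ t.vals ∧ q = .num |n|}
  | .add t u => {q | ∃ m n : ℤ, PTerm.num m ∈ t.vals ∧ PTerm.num n ∈ u.vals ∧ q = .num (m + n)}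
  | .sub t u => {q | ∃ m n : ℤ, PTerm.num m ∈ t.vals ∧ PTerm.num n ∈ u.vals ∧ q = .num (m - n)}
  | .mul t u => {q | ∃ m n : ℤ, PTerm.num m ∈ t.vals ∧ PTerm.num n ∈ u.vals ∧ q = .num (m * n)}
  | .div t u => {q | ∃ m n : ℤ, PTerm.num m ∈ t.vals ∧ PTerm.num n ∈ u.vals ∧ n ≠ 0 ∧
      q = .num (tdiv m n)}
  | .mod t u => {q | ∃ m n : ℤ, PTerm.num m ∈ t.vals ∧ PTerm.num n ∈ u.vals ∧ n ≠ 0 ∧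
      q = .num (m - n * tdiv m n)}
  | .intv t u => {q | ∃ m n k : ℤ, PTerm.num m ∈ t.vals ∧ PTerm.num n ∈ u.vals ∧
      m ≤ k ∧ k ≤ n ∧ q = .num k}

/-- Values of a tuple of ground terms. -/
def valsList : List MGT → Set (List PTerm)
  | [] => {[]}
  | t :: ts => {rs | ∃ r rs', r ∈ t.vals ∧ rs' ∈ valsList ts ∧ rs = r :: rs'}

/-- `t` is ground (contains no variables). -/
def MGT.ground : MGT → Prop
  | .pre _ => True
  | .var _ => False
  | .abs t => t.ground
  | .add t u | .sub t u | .mul t u | .div t u | .mod t u | .intv t u => t.ground ∧ u.ground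

/-- Substituting precomputed terms for variables. -/
def MGT.subst (σ : ℕ → PTerm) : MGT → MGT
  | .pre p => .pre p
  | .var n => .pre (σ n)
  | .abs t => .abs (t.subst σ)
  | .add t u => .add (t.subst σ) (u.subst σ)
  | .sub t u => .sub (t.subst σ) (u.subst σ)
  | .mul t u => .mul (t.subst σ) (u.subst σ)
  | .div t u => .div (t.subst σ) (u.subst σ)
  | .mod t u => .mod (t.subst σ) (u.subst σ)
  | .intv t u => .intv (t.subst σ) (u.subst σ)

/-- Applying a valuation (a map on symbolic constants) to a term. -/
def MGT.appV (v : String → PTerm) : MGT → MGT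
  | .pre (.sym c) => .pre (v c)
  | .pre p => .pre p
  | .var n => .var n
  | .abs t => .abs (t.appV v)
  | .add t u => .add (t.appV v) (u.appV v)
  | .sub t u => .sub (t.appV v) (u.appV v)
  | .mul t u => .mul (t.appV v) (u.appV v)
  | .div t u => .div (t.appV v) (u.appV v)
  | .mod t u => .mod (t.appV v) (u.appV v)
  | .intv t u => .intv (t.appV v) (u.appV v)

/-- Bound on variable indices occurring in a term. -/
def MGT.vb : MGT → ℕ
  | .pre _ => 0
  | .var n => n + 1
  | .abs t => t.vb
  | .add t u | .sub t u | .mul t u | .div t u | .mod t u | .intv t u => max t.vb u.vb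

/-- Atoms `p(t₁,…,tₙ)`. -/
structure MAtom : Type where
  p : String
  args : List MGT

/-- The predicate symbol `p/n` of an atom. -/
def MAtom.pn (a : MAtom) : String × ℕ := (a.p, a.args.length)

inductive MLit : Type
  | pos : MAtom → MLit
  | neg : MAtom → MLit
  | nneg : MAtom → MLit

structure MComp : Type where
  rel : CRel
  l : MGT
  r : MGT

inductive MBodyElem : Type
  | lit : MLit → MBodyElem
  | cmp : MComp → MBodyElem

inductive MHead : Type
  | basic : MAtom → MHead
  | choice : MAtom → MHead
  | cons : MHead

structure MRule : Type where
  head : MHead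
  body : List MBodyElem

abbrev MProgram := List MRule

def MAtom.subst (σ : ℕ → PTerm) (a : MAtom) : MAtom := ⟨a.p, a.args.map (MGT.subst σ)⟩
def MAtom.appV (v : String → PTerm) (a : MAtom) : MAtom := ⟨a.p, a.args.map (MGT.appV v)⟩

def MLit.subst (σ : ℕ → PTerm) : MLit → MLit
  | .pos a => .pos (a.subst σ)
  | .neg a => .neg (a.subst σ)
  | .nneg a => .nneg (a.subst σ)
def MLit.appV (v : String → PTerm) : MLit → MLit
  | .pos a => .pos (a.appV v)
  | .neg a => .neg (a.appV v)
  | .nneg a => .nneg (a.appV v)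

def MComp.subst (σ : ℕ → PTerm) (c : MComp) : MComp := ⟨c.rel, c.l.subst σ, c.r.subst σ⟩
def MComp.appV (v : String → PTerm) (c : MComp) : MComp := ⟨c.rel, c.l.appV v, c.r.appV v⟩

def MBodyElem.subst (σ : ℕ → PTerm) : MBodyElem → MBodyElem
  | .lit l => .lit (l.subst σ)
  | .cmp c => .cmp (c.subst σ)
def MBodyElem.appV (v : String → PTerm) : MBodyElem → MBodyElem
  | .lit l => .lit (l.appV v)
  | .cmp c => .cmp (c.appV v)

def MHead.subst (σ : ℕ → PTerm) : MHead → MHead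
  | .basic a => .basic (a.subst σ)
  | .choice a => .choice (a.subst σ)
  | .cons => .cons
def MHead.appV (v : String → PTerm) : MHead → MHead
  | .basic a => .basic (a.appV v)
  | .choice a => .choice (a.appV v)
  | .cons => .cons

def MRule.subst (σ : ℕ → PTerm) (R : MRule) : MRule :=
  ⟨R.head.subst σ, R.body.map (MBodyElem.subst σ)⟩
def MRule.appV (v : String → PTerm) (R : MRule) : MRule :=
  ⟨R.head.appV v, R.body.map (MBodyElem.appV v)⟩

/-- Bound on variable indices of a rule. -/
def MAtom.vb (a : MAtom) : ℕ := (a.args.map MGT.vb).foldr max 0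
def MLit.vb : MLit → ℕ
  | .pos a | .neg a | .nneg a => a.vb
def MBodyElem.vb : MBodyElem → ℕ
  | .lit l => l.vb
  | .cmp c => max c.l.vb c.r.vb
def MHead.vb : MHead → ℕ
  | .basic a | .choice a => a.vb
  | .cons => 0
def MRule.vb (R : MRule) : ℕ := max R.head.vb ((R.body.map MBodyElem.vb).foldr max 0)

/-- Precomputed (ground) atoms. -/
abbrev GAtom := String × List PTerm

/-! ## Infinitary propositional formulas and their stable models -/

inductive IProp (A : Type) : Type 1
  | atom : A → IProp A
  | bot : IProp A
  | conj : (ι : Type) → (ι → IProp A) → IProp A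
  | disj : (ι : Type) → (ι → IProp A) → IProp A
  | impl : IProp A → IProp A → IProp A

/-- Satisfaction in the infinitary logic of here-and-there, for an HT-interpretation
`⟨Hs, Ts⟩` with `Hs ⊆ Ts`. -/
def IProp.htSat {A : Type} (Hs Ts : Set A) : IProp A → Prop
  | .atom a => a ∈ Hs
  | .bot => False
  | .conj _ f => ∀ i, (f i).htSat Hs Ts
  | .disj _ f => ∃ i, (f i).htSat Hs Ts
  | .impl F G => ((F.htSat Hs Ts) → (G.htSat Hs Ts)) ∧ ((F.htSat Ts Ts) → (G.htSat Ts Ts))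

def IProp.top {A : Type} : IProp A := .conj PEmpty (fun x => x.elim)

/-- Stable models (answer sets) of a set of infinitary propositional formulas. -/
def StablePropSet {A : Type} (X : Set (IProp A)) (J : Set A) : Prop :=
  (∀ φ ∈ X, φ.htSat J J) ∧ ∀ H : Set A, H ⊂ J → ¬ ∀ φ ∈ X, φ.htSat H J

/-- Strong equivalence of infinitary propositional formulas: they have the same
HT-models. -/
def StrongEquivProp {A : Type} (F G : IProp A) : Prop :=
  ∀ Hs Ts : Set A, Hs ⊆ Ts → (F.htSat Hs Ts ↔ G.htSat Hs Ts)

/-! ## The translation τ -/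

open scoped Classical in
noncomputable def tauLit : MLit → IProp GAtom
  | .pos a => .disj {rs // rs ∈ valsList a.args} fun rs => .atom (a.p, rs.1)
  | .neg a => .disj {rs // rs ∈ valsList a.args} fun rs => .impl (.atom (a.p, rs.1)) .bot
  | .nneg a => .disj {rs // rs ∈ valsList a.args} fun rs =>
      .impl (.impl (.atom (a.p, rs.1)) .bot) .bot

open scoped Classical in
noncomputable def tauCmp (c : MComp) : IProp GAtom :=
  if ∃ r1 ∈ c.l.vals, ∃ r2 ∈ c.r.vals, c.rel.holds r1 r2 then IProp.top else .bot

noncomputable def tauBodyElem : MBodyElem → IProp GAtom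
  | .lit l => tauLit l
  | .cmp c => tauCmp c

noncomputable def tauBody (b : List MBodyElem) : IProp GAtom :=
  .conj {e // e ∈ b} fun e => tauBodyElem e.1

/-- The translation τ of a ground rule. -/
noncomputable def tauRule (R : MRule) : IProp GAtom :=
  match R.head with
  | .basic a => .impl (tauBody R.body)
      (.conj {rs // rs ∈ valsList a.args} fun rs => .atom (a.p, rs.1))
  | .choice a => .impl (tauBody R.body)
      (.conj {rs // rs ∈ valsList a.args} fun rs =>
        .disj Bool fun bb =>
          cond bb (.atom (a.p, rs.1)) (.impl (.atom (a.p, rs.1)) .bot))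
  | .cons => .impl (tauBody R.body) .bot

/-- `τPrg`: translations of all instances of the rules of `Prg`. -/
noncomputable def tauProg (Prg : MProgram) : Set (IProp GAtom) :=
  {φ | ∃ R ∈ Prg, ∃ σ : ℕ → PTerm, φ = tauRule (R.subst σ)}

/-- Stable models of a mini-gringo program. -/
noncomputable def ProgStable (Prg : MProgram) (J : Set GAtom) : Prop :=
  StablePropSet (tauProg Prg) J

/-! ## First-order formulas over σ₀ -/

/-- Terms of the integer sort. -/
inductive ITm : Type
  | const : ℤ → ITm
  | var : ℕ → ITm
  | abs : ITm → ITm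
  | add : ITm → ITm → ITm
  | sub : ITm → ITm → ITm
  | mul : ITm → ITm → ITm

def ITm.eval (η : ℕ → ℤ) : ITm → ℤ
  | .const n => n
  | .var n => η n
  | .abs t => |t.eval η|
  | .add t u => t.eval η + u.eval η
  | .sub t u => t.eval η - u.eval η
  | .mul t u => t.eval η * u.eval η

/-- Terms of the general sort (with the integer sort as a subsort). -/
inductive GTm : Type
  | int : ITm → GTm
  | pre : PTerm → GTm
  | var : ℕ → GTm

/-- Evaluation of a general term, given a valuation `v` interpreting symbolic constants
and assignments `ξ` (general variables) and `η` (integer variables). -/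
def GTm.eval (v : String → PTerm) (ξ : ℕ → PTerm) (η : ℕ → ℤ) : GTm → PTerm
  | .int t => .num (t.eval η)
  | .pre (.sym c) => v c
  | .pre p => p
  | .var n => ξ n

/-- First-order formulas over the two-sorted signature σ₀. -/
inductive S0F : Type
  | patom : String → List GTm → S0F
  | cmp : CRel → GTm → GTm → S0F
  | bot : S0F
  | and : S0F → S0F → S0F
  | or : S0F → S0F → S0F
  | imp : S0F → S0F → S0F
  | allG : ℕ → S0F → S0F
  | exG : ℕ → S0F → S0F
  | allI : ℕ → S0F → S0F
  | exI : ℕ → S0F → S0F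

/-- Classical satisfaction over the interpretation of σ₀ that is standard for the
placeholders interpreted by `v`, with the precomputed atoms in `J` true. -/
def S0F.sat (v : String → PTerm) (J : Set GAtom) :
    (ξ : ℕ → PTerm) → (η : ℕ → ℤ) → S0F → Prop
  | ξ, η, .patom p ts => (p, ts.map (GTm.eval v ξ η)) ∈ J
  | ξ, η, .cmp r a b => r.holds (a.eval v ξ η) (b.eval v ξ η)
  | _, _, .bot => False
  | ξ, η, .and F G => F.sat v J ξ η ∧ G.sat v J ξ η
  | ξ, η, .or F G => F.sat v J ξ η ∨ G.sat v J ξ η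
  | ξ, η, .imp F G => F.sat v J ξ η → G.sat v J ξ η
  | ξ, η, .allG n F => ∀ d : PTerm, F.sat v J (Function.update ξ n d) η
  | ξ, η, .exG n F => ∃ d : PTerm, F.sat v J (Function.update ξ n d) η
  | ξ, η, .allI n F => ∀ i : ℤ, F.sat v J ξ (Function.update η n i)
  | ξ, η, .exI n F => ∃ i : ℤ, F.sat v J ξ (Function.update η n i)

/-- Here-and-there satisfaction over σ₀ (all predicate symbols `p/n` intensional,
comparisons extensional), for the HT-interpretation `⟨Hs, J⟩`. -/
def S0F.htSat (v : String → PTerm) (Hs J : Set GAtom) :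
    (ξ : ℕ → PTerm) → (η : ℕ → ℤ) → S0F → Prop
  | ξ, η, .patom p ts => (p, ts.map (GTm.eval v ξ η)) ∈ Hs
  | ξ, η, .cmp r a b => r.holds (a.eval v ξ η) (b.eval v ξ η)
  | _, _, .bot => False
  | ξ, η, .and F G => F.htSat v Hs J ξ η ∧ G.htSat v Hs J ξ η
  | ξ, η, .or F G => F.htSat v Hs J ξ η ∨ G.htSat v Hs J ξ η
  | ξ, η, .imp F G => (F.htSat v Hs J ξ η → G.htSat v Hs J ξ η) ∧ (F.sat v J ξ η → G.sat v J ξ η)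
  | ξ, η, .allG n F => ∀ d : PTerm, F.htSat v Hs J (Function.update ξ n d) η
  | ξ, η, .exG n F => ∃ d : PTerm, F.htSat v Hs J (Function.update ξ n d) η
  | ξ, η, .allI n F => ∀ i : ℤ, F.htSat v Hs J ξ (Function.update η n i)
  | ξ, η, .exI n F => ∃ i : ℤ, F.htSat v Hs J ξ (Function.update η n i)

/-- The valuation of standard interpretations: every constant denotes itself. -/
def symv : String → PTerm := fun c => .sym c

def xi0 : ℕ → PTerm := fun _ => .num 0
def eta0 : ℕ → ℤ := fun _ => 0

/-- `I` (determined by `v` and `J`) is a stable model of the set `Γ` of σ₀-sentences,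
relative to the assignments `ξ`, `η`. -/
def FOStable (v : String → PTerm) (Γ : Set S0F) (J : Set GAtom)
    (ξ : ℕ → PTerm) (η : ℕ → ℤ) : Prop :=
  (∀ F ∈ Γ, F.sat v J ξ η) ∧
  ∀ Hs : Set GAtom, Hs ⊂ J → ¬ ∀ F ∈ Γ, F.htSat v Hs J ξ η

/-! ## The translations val, τ^B and τ* -/

def S0F.top : S0F := .imp .bot .bot

/-- Negation. -/
def S0F.neg (F : S0F) : S0F := .imp F .bot

/-- The formula `val_t(V)`, with fresh integer variables numbered from `i` on. -/
def valF : MGT → GTm → ℕ → S0F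
  | .pre p, V, _ => .cmp .req V (.pre p)
  | .var n, V, _ => .cmp .req V (.var n)
  | .abs t, V, i =>
      .exI i (.and (valF t (.int (.var i)) (i + 1))
        (.cmp .req V (.int (.abs (.var i)))))
  | .add t u, V, i =>
      .exI i (.exI (i + 1)
        (.and (valF t (.int (.var i)) (i + 2))
        (.and (valF u (.int (.var (i + 1))) (i + 2))
          (.cmp .req V (.int (.add (.var i) (.var (i + 1))))))))
  | .sub t u, V, i =>
      .exI i (.exI (i + 1)
        (.and (valF t (.int (.var i)) (i + 2))
        (.and (valF u (.int (.var (i + 1))) (i + 2))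
          (.cmp .req V (.int (.sub (.var i) (.var (i + 1))))))))
  | .mul t u, V, i =>
      .exI i (.exI (i + 1)
        (.and (valF t (.int (.var i)) (i + 2))
        (.and (valF u (.int (.var (i + 1))) (i + 2))
          (.cmp .req V (.int (.mul (.var i) (.var (i + 1))))))))
  | .div t u, V, i =>
      .exI i (.exI (i + 1) (.exI (i + 2)
        (.and (valF t (.int (.var i)) (i + 3))
        (.and (valF u (.int (.var (i + 1))) (i + 3))
        (.and (.cmp .rle (.int (.mul (.var (i + 2)) (.abs (.var (i + 1)))))
                         (.int (.abs (.var i))))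
        (.and (.cmp .rlt (.int (.abs (.var i)))
                         (.int (.mul (.add (.var (i + 2)) (.const 1)) (.abs (.var (i + 1))))))
          (.or (.and (.cmp .rge (.int (.mul (.var i) (.var (i + 1)))) (.int (.const 0)))
                     (.cmp .req V (.int (.var (i + 2)))))
               (.and (.cmp .rlt (.int (.mul (.var i) (.var (i + 1)))) (.int (.const 0)))
                     (.cmp .req V (.int (.sub (.const 0) (.var (i + 2)))))))))))))
  | .mod t u, V, i =>
      .exI i (.exI (i + 1) (.exI (i + 2)
        (.and (valF t (.int (.var i)) (i + 3))
        (.and (valF u (.int (.var (i + 1))) (i + 3))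
        (.and (.cmp .rle (.int (.mul (.var (i + 2)) (.abs (.var (i + 1)))))
                         (.int (.abs (.var i))))
        (.and (.cmp .rlt (.int (.abs (.var i)))
                         (.int (.mul (.add (.var (i + 2)) (.const 1)) (.abs (.var (i + 1))))))
          (.or (.and (.cmp .rge (.int (.mul (.var i) (.var (i + 1)))) (.int (.const 0)))
                     (.cmp .req V (.int (.sub (.var i) (.mul (.var (i + 2)) (.var (i + 1)))))))
               (.and (.cmp .rlt (.int (.mul (.var i) (.var (i + 1)))) (.int (.const 0)))
                     (.cmp .req V (.int (.add (.var i) (.mul (.var (i + 2)) (.var (i + 1))))))))))))))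
  | .intv t u, V, i =>
      .exI i (.exI (i + 1) (.exI (i + 2)
        (.and (valF t (.int (.var i)) (i + 3))
        (.and (valF u (.int (.var (i + 1))) (i + 3))
        (.and (.cmp .rle (.int (.var i)) (.int (.var (i + 2))))
        (.and (.cmp .rle (.int (.var (i + 2))) (.int (.var (i + 1))))
          (.cmp .req V (.int (.var (i + 2))))))))))

/-- `val_{t₁,…,tₙ}(V_g, …, V_{g+n-1})`. -/
def valsFml : List MGT → ℕ → S0F
  | [], _ => S0F.top
  | t :: ts, g => .and (valF t (.var g) 0) (valsFml ts (g + 1))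

def varsList (g k : ℕ) : List GTm := (List.range k).map fun i => .var (g + i)

/-- Existential quantification of the general variables `g, …, g+k-1`. -/
def exGs (g : ℕ) : ℕ → S0F → S0F
  | 0, F => F
  | k + 1, F => .exG g (exGs (g + 1) k F)

/-- Universal quantification of the general variables `0, …, n-1`. -/
def allGs : ℕ → S0F → S0F
  | 0, F => F
  | n + 1, F => .allG n (allGs n F)

/-- The translation τ^B of a literal or comparison, with fresh general variables
numbered from `g` on. -/
def tauBF : MBodyElem → ℕ → S0F
  | .lit (.pos a), g =>
      exGs g a.args.length
        (.and (valsFml a.args g) (.patom a.p (varsList g a.args.length)))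
  | .lit (.neg a), g =>
      exGs g a.args.length
        (.and (valsFml a.args g) (S0F.neg (.patom a.p (varsList g a.args.length))))
  | .lit (.nneg a), g =>
      exGs g a.args.length
        (.and (valsFml a.args g) (S0F.neg (S0F.neg (.patom a.p (varsList g a.args.length)))))
  | .cmp c, g =>
      .exG g (.exG (g + 1)
        (.and (valF c.l (.var g) 0)
        (.and (valF c.r (.var (g + 1)) 0)
          (.cmp c.rel (.var g) (.var (g + 1))))))

def tauBodyF (b : List MBodyElem) (g : ℕ) : S0F :=
  b.foldr (fun e F => .and (tauBF e g) F) S0F.top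

/-- The translation τ* of a mini-gringo rule. -/
def tauStar (R : MRule) : S0F :=
  match R.head with
  | .basic a =>
      allGs (R.vb + a.args.length)
        (.imp (.and (valsFml a.args R.vb) (tauBodyF R.body (R.vb + a.args.length)))
          (.patom a.p (varsList R.vb a.args.length)))
  | .choice a =>
      allGs (R.vb + a.args.length)
        (.imp (.and (valsFml a.args R.vb)
                (.and (tauBodyF R.body (R.vb + a.args.length))
                  (S0F.neg (S0F.neg (.patom a.p (varsList R.vb a.args.length))))))
          (.patom a.p (varsList R.vb a.args.length)))
  | .cons => allGs R.vb (.imp (tauBodyF R.body R.vb) .bot)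

/-- `τ*Prg`. -/
def tauStarProg (Prg : MProgram) : Set S0F := {F | ∃ R ∈ Prg, F = tauStar R}

/-! ## The grounding translation `F ↦ F^prop` -/

open scoped Classical in
noncomputable def S0F.toProp (v : String → PTerm) :
    (ξ : ℕ → PTerm) → (η : ℕ → ℤ) → S0F → IProp GAtom
  | ξ, η, .patom p ts => .atom (p, ts.map (GTm.eval v ξ η))
  | ξ, η, .cmp r a b => if r.holds (a.eval v ξ η) (b.eval v ξ η) then IProp.top else .bot
  | _, _, .bot => .bot
  | ξ, η, .and F G => .conj Bool fun bb => cond bb (F.toProp v ξ η) (G.toProp v ξ η)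
  | ξ, η, .or F G => .disj Bool fun bb => cond bb (F.toProp v ξ η) (G.toProp v ξ η)
  | ξ, η, .imp F G => .impl (F.toProp v ξ η) (G.toProp v ξ η)
  | ξ, η, .allG n F => .conj PTerm fun d => F.toProp v (Function.update ξ n d) η
  | ξ, η, .exG n F => .disj PTerm fun d => F.toProp v (Function.update ξ n d) η
  | ξ, η, .allI n F => .conj ℤ fun i => F.toProp v ξ (Function.update η n i)
  | ξ, η, .exI n F => .disj ℤ fun i => F.toProp v ξ (Function.update η n i)

/-! ## Programs with input and output -/

structure IOProgram : Type where
  rules : MProgram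
  PH : Finset String
  In : Finset (String × ℕ)
  Out : Finset (String × ℕ)

/-- The predicate symbol `pn` occurs in the rule `R`. -/
def occursRule (pn : String × ℕ) (R : MRule) : Prop :=
  (∃ a, (R.head = .basic a ∨ R.head = .choice a) ∧ a.pn = pn) ∨
  (∃ a, (MBodyElem.lit (.pos a) ∈ R.body ∨ MBodyElem.lit (.neg a) ∈ R.body ∨
         MBodyElem.lit (.nneg a) ∈ R.body) ∧ a.pn = pn)

/-- Well-formedness of an io-program: `In` and `Out` are disjoint and input symbols do
not occur in heads of rules. -/
def IOProgram.WF (Ω : IOProgram) : Prop :=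
  Disjoint Ω.In Ω.Out ∧
  ∀ R ∈ Ω.rules, ∀ a : MAtom, (R.head = .basic a ∨ R.head = .choice a) → a.pn ∉ Ω.In

def IOProgram.PublicSym (Ω : IOProgram) (pn : String × ℕ) : Prop := pn ∈ Ω.In ∨ pn ∈ Ω.Out
def IOProgram.PrivateSym (Ω : IOProgram) (pn : String × ℕ) : Prop :=
  pn ∉ Ω.In ∧ pn ∉ Ω.Out ∧ ∃ R ∈ Ω.rules, occursRule pn R
def IOProgram.PrivateAtom (Ω : IOProgram) (a : GAtom) : Prop :=
  Ω.PrivateSym (a.1, a.2.length)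
/-- Intensional symbols for the completion of an io-program: output and private
symbols (input symbols and comparisons are extensional). -/
def IOProgram.IntenSym (Ω : IOProgram) (pn : String × ℕ) : Prop :=
  pn ∈ Ω.Out ∨ Ω.PrivateSym pn

/-- `r` is not a placeholder. -/
def noPH (PH : Finset String) (r : PTerm) : Prop := ∀ c ∈ PH, r ≠ .sym c

/-- `v` is a valuation on `PH`: it maps placeholders to precomputed terms that are not
placeholders and is the identity elsewhere. -/
def StdForPH (PH : Finset String) (v : String → PTerm) : Prop :=
  (∀ c ∉ PH, v c = .sym c) ∧ ∀ c ∈ PH, noPH PH (v c)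

/-- `(v, I)` is an input for `Ω`. -/
def ValidInput (Ω : IOProgram) (v : String → PTerm) (I : Set GAtom) : Prop :=
  StdForPH Ω.PH v ∧
  ∀ a ∈ I, (a.1, a.2.length) ∈ Ω.In ∧ ∀ r ∈ a.2, noPH Ω.PH r

/-- The input atoms of a set of public atoms. -/
def IOProgram.inPart (Ω : IOProgram) (Pst : Set GAtom) : Set GAtom :=
  {a ∈ Pst | (a.1, a.2.length) ∈ Ω.In}

/-- `Pst` is an io-model of `Ω` for the input `(v, I)`: the set of public atoms of some
stable model of `v(Prg) ∪ I`. -/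
noncomputable def IOModel (Ω : IOProgram) (v : String → PTerm) (I : Set GAtom)
    (Pst : Set GAtom) : Prop :=
  ∃ J : Set GAtom,
    StablePropSet (tauProg (Ω.rules.map (MRule.appV v)) ∪ (fun a => IProp.atom a) '' I) J ∧
    Pst = {a ∈ J | Ω.PublicSym (a.1, a.2.length)}

/-! ## Satisfaction of the completion of an io-program -/

/-- Satisfaction of a ground literal, following τ^B. -/
def GLitSat (T : Set GAtom) : MLit → Prop
  | .pos a => ∃ rs ∈ valsList a.args, (a.p, rs) ∈ T
  | .neg a => ∃ rs ∈ valsList a.args, (a.p, rs) ∉ T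
  | .nneg a => ∃ rs ∈ valsList a.args, (a.p, rs) ∈ T

def GBodySat (T : Set GAtom) (b : List MBodyElem) : Prop :=
  ∀ e ∈ b, match e with
    | MBodyElem.lit l => GLitSat T l
    | MBodyElem.cmp c => ∃ r1 ∈ c.l.vals, ∃ r2 ∈ c.r.vals, c.rel.holds r1 r2

/-- The ground instance `(R.appV v).subst σ` supports the atom `(p, rs)` in `T`
(a disjunct of the completed definition of `p`). -/
def Supports (v : String → PTerm) (σ : ℕ → PTerm) (R : MRule) (T : Set GAtom)
    (p : String) (rs : List PTerm) : Prop :=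
  (∃ a : MAtom, ((R.appV v).subst σ).head = .basic a ∧ a.p = p ∧ rs ∈ valsList a.args ∧
     GBodySat T ((R.appV v).subst σ).body) ∨
  (∃ a : MAtom, ((R.appV v).subst σ).head = .choice a ∧ a.p = p ∧ rs ∈ valsList a.args ∧
     GBodySat T ((R.appV v).subst σ).body ∧ (p, rs) ∈ T)

/-- `T` satisfies the first-order completion of `v(Prg)` (intensional symbols: output and
private symbols of `Ω`). -/
def CompSat (Ω : IOProgram) (v : String → PTerm) (T : Set GAtom) : Prop :=
  (∀ p n, Ω.IntenSym (p, n) → ∀ rs : List PTerm, rs.length = n →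
     ((p, rs) ∈ T ↔ ∃ R ∈ Ω.rules, ∃ σ : ℕ → PTerm, Supports v σ R T p rs)) ∧
  (∀ R ∈ Ω.rules, R.head = .cons → ∀ σ : ℕ → PTerm,
     ¬ GBodySat T (((R.appV v).subst σ)).body)

/-- Satisfaction of the second-order completion `COMP[Ω]` (private symbols existentially
quantified) by the interpretation standard for `PH` determined by `v` and `T`. -/
def SatCompIO (Ω : IOProgram) (v : String → PTerm) (T : Set GAtom) : Prop :=
  ∃ Q : Set GAtom, (∀ a ∈ Q, Ω.PrivateAtom a) ∧
    CompSat Ω v ({a ∈ T | ¬ Ω.PrivateAtom a} ∪ Q)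

/-! ## Positive dependency graphs and tightness -/

/-- A vertex of the positive dependency graph of `Ω` for an input: a ground atom of an
output or private symbol whose arguments are not placeholders. -/
def IOProgram.IsVertex (Ω : IOProgram) (A : GAtom) : Prop :=
  ((A.1, A.2.length) ∈ Ω.Out ∨ Ω.PrivateSym (A.1, A.2.length)) ∧
  ∀ r ∈ A.2, noPH Ω.PH r

/-- Edge relation of the positive dependency graph of `Ω` for the input `(v, I)`. -/
def IODepEdge (Ω : IOProgram) (v : String → PTerm) (I : Set GAtom)
    (A B : GAtom) : Prop :=
  Ω.IsVertex A ∧ Ω.IsVertex B ∧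
  ∃ R ∈ Ω.rules, ∃ σ : ℕ → PTerm,
    (∃ a : MAtom, (((R.appV v).subst σ).head = .basic a ∨
        ((R.appV v).subst σ).head = .choice a) ∧
      a.p = A.1 ∧ A.2 ∈ valsList a.args) ∧
    (∃ a : MAtom, MBodyElem.lit (.pos a) ∈ ((R.appV v).subst σ).body ∧
      a.p = B.1 ∧ B.2 ∈ valsList a.args) ∧
    (∀ a : MAtom, (MBodyElem.lit (.pos a) ∈ ((R.appV v).subst σ).body ∨
        MBodyElem.lit (.nneg a) ∈ ((R.appV v).subst σ).body) →
      (a.p, a.args.length) ∈ Ω.In → ∃ rs ∈ valsList a.args, (a.p, rs) ∈ I) ∧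
    (∀ a : MAtom, MBodyElem.lit (.neg a) ∈ ((R.appV v).subst σ).body →
      (a.p, a.args.length) ∈ Ω.In → ∃ rs ∈ valsList a.args, (a.p, rs) ∉ I) ∧
    (∀ c : MComp, MBodyElem.cmp c ∈ ((R.appV v).subst σ).body →
      ∃ r1 ∈ c.l.vals, ∃ r2 ∈ c.r.vals, c.rel.holds r1 r2)

/-- `Ω` is locally tight on the input `(v, I)`: its positive dependency graph for this
input has no infinite walks. -/
def LocallyTight (Ω : IOProgram) (v : String → PTerm) (I : Set GAtom) : Prop :=
  ¬ ∃ w : ℕ → GAtom, ∀ n, IODepEdge Ω v I (w n) (w (n + 1))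

/-- Edge relation of the positive predicate dependency graph of `Prg`. -/
def PredEdge (Prg : MProgram) (pn pn' : String × ℕ) : Prop :=
  ∃ R ∈ Prg, (∃ a, (R.head = .basic a ∨ R.head = .choice a) ∧ a.pn = pn) ∧
    (∃ a, MBodyElem.lit (.pos a) ∈ R.body ∧ a.pn = pn')

/-- `Prg` is tight: its positive predicate dependency graph is acyclic. -/
def Tight (Prg : MProgram) : Prop := ∀ pn, ¬ Relation.TransGen (PredEdge Prg) pn pn

lemma sat_iff_prop (v : String → PTerm) (J : Set GAtom) :
    ∀ (F : S0F) (ξ : ℕ → PTerm) (η : ℕ → ℤ),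
      F.sat v J ξ η ↔ (F.toProp v ξ η).htSat J J := by
  intro F
  induction F with
  | patom p ts => intro ξ η; simp [S0F.sat, S0F.toProp, IProp.htSat]
  | cmp r a b =>
      intro ξ η
      simp only [S0F.sat, S0F.toProp]
      split_ifs with h
      · simpa [IProp.top, IProp.htSat] using h
      · simpa [IProp.htSat] using h
  | bot => intro ξ η; simp [S0F.sat, S0F.toProp, IProp.htSat]
  | and F G ihF ihG =>
      intro ξ η
      simp only [S0F.sat, S0F.toProp, IProp.htSat]
      constructor
      · rintro ⟨h1, h2⟩ b; cases b
        · exact (ihG ξ η).mp h2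
        · exact (ihF ξ η).mp h1
      · intro h; exact ⟨(ihF ξ η).mpr (h true), (ihG ξ η).mpr (h false)⟩
  | or F G ihF ihG =>
      intro ξ η
      simp only [S0F.sat, S0F.toProp, IProp.htSat]
      constructor
      · rintro (h | h)
        · exact ⟨true, (ihF ξ η).mp h⟩
        · exact ⟨false, (ihG ξ η).mp h⟩
      · rintro ⟨b, h⟩; cases b
        · exact Or.inr ((ihG ξ η).mpr h)
        · exact Or.inl ((ihF ξ η).mpr h)
  | imp F G ihF ihG =>
      intro ξ η
      simp only [S0F.sat, S0F.toProp, IProp.htSat]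
      constructor
      · intro h
        exact ⟨fun hF => (ihG ξ η).mp (h ((ihF ξ η).mpr hF)),
               fun hF => (ihG ξ η).mp (h ((ihF ξ η).mpr hF))⟩
      · intro h hF
        exact (ihG ξ η).mpr (h.1 ((ihF ξ η).mp hF))
  | allG n F ih =>
      intro ξ η
      simp only [S0F.sat, S0F.toProp, IProp.htSat]
      exact forall_congr' fun d => ih _ η
  | exG n F ih =>
      intro ξ η
      simp only [S0F.sat, S0F.toProp, IProp.htSat]
      exact exists_congr fun d => ih _ η
  | allI n F ih =>
      intro ξ η
      simp only [S0F.sat, S0F.toProp, IProp.htSat]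
      exact forall_congr' fun i => ih ξ _
  | exI n F ih =>
      intro ξ η
      simp only [S0F.sat, S0F.toProp, IProp.htSat]
      exact exists_congr fun i => ih ξ _

lemma htSat_iff_prop (v : String → PTerm) (Hs J : Set GAtom) :
    ∀ (F : S0F) (ξ : ℕ → PTerm) (η : ℕ → ℤ),
      F.htSat v Hs J ξ η ↔ (F.toProp v ξ η).htSat Hs J := by
  intro F
  induction F with
  | patom p ts => intro ξ η; simp [S0F.htSat, S0F.toProp, IProp.htSat]
  | cmp r a b =>
      intro ξ η
      simp only [S0F.htSat, S0F.toProp]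
      split_ifs with h
      · simpa [IProp.top, IProp.htSat] using h
      · simpa [IProp.htSat] using h
  | bot => intro ξ η; simp [S0F.htSat, S0F.toProp, IProp.htSat]
  | and F G ihF ihG =>
      intro ξ η
      simp only [S0F.htSat, S0F.toProp, IProp.htSat]
      constructor
      · rintro ⟨h1, h2⟩ b; cases b
        · exact (ihG ξ η).mp h2
        · exact (ihF ξ η).mp h1
      · intro h; exact ⟨(ihF ξ η).mpr (h true), (ihG ξ η).mpr (h false)⟩
  | or F G ihF ihG =>
      intro ξ η
      simp only [S0F.htSat, S0F.toProp, IProp.htSat]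
      constructor
      · rintro (h | h)
        · exact ⟨true, (ihF ξ η).mp h⟩
        · exact ⟨false, (ihG ξ η).mp h⟩
      · rintro ⟨b, h⟩; cases b
        · exact Or.inr ((ihG ξ η).mpr h)
        · exact Or.inl ((ihF ξ η).mpr h)
  | imp F G ihF ihG =>
      intro ξ η
      simp only [S0F.htSat, S0F.toProp, IProp.htSat]
      constructor
      · rintro ⟨h1, h2⟩
        refine ⟨fun hF => (ihG ξ η).mp (h1 ((ihF ξ η).mpr hF)), fun hF => ?_⟩
        exact (sat_iff_prop v J G ξ η).mp (h2 ((sat_iff_prop v J F ξ η).mpr hF))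
      · rintro ⟨h1, h2⟩
        refine ⟨fun hF => (ihG ξ η).mpr (h1 ((ihF ξ η).mp hF)), fun hF => ?_⟩
        exact (sat_iff_prop v J G ξ η).mpr (h2 ((sat_iff_prop v J F ξ η).mp hF))
  | allG n F ih =>
      intro ξ η
      simp only [S0F.htSat, S0F.toProp, IProp.htSat]
      exact forall_congr' fun d => ih _ η
  | exG n F ih =>
      intro ξ η
      simp only [S0F.htSat, S0F.toProp, IProp.htSat]
      exact exists_congr fun d => ih _ η
  | allI n F ih =>
      intro ξ η
      simp only [S0F.htSat, S0F.toProp, IProp.htSat]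
      exact forall_congr' fun i => ih ξ _
  | exI n F ih =>
      intro ξ η
      simp only [S0F.htSat, S0F.toProp, IProp.htSat]
      exact exists_congr fun i => ih ξ _

/-- A standard interpretation `I` of σ₀ is a stable model of a set `Γ` of sentences
over σ₀ iff `I↓` is a stable model of `{F^prop : F ∈ Γ}`. -/
theorem foStable_iff_propStable (Γ : Set S0F) (J : Set GAtom)
    (ξ : ℕ → PTerm) (η : ℕ → ℤ) :
    FOStable symv Γ J ξ η ↔
      StablePropSet {φ | ∃ F ∈ Γ, φ = F.toProp symv ξ η} J := by
  unfold FOStable StablePropSet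
  constructor
  · rintro ⟨h1, h2⟩
    constructor
    · rintro φ ⟨F, hF, rfl⟩
      exact (sat_iff_prop symv J F ξ η).mp (h1 F hF)
    · intro H hH hall
      exact h2 H hH fun F hF =>
        (htSat_iff_prop symv H J F ξ η).mpr (hall _ ⟨F, hF, rfl⟩)
  · rintro ⟨h1, h2⟩
    constructor
    · intro F hF
      exact (sat_iff_prop symv J F ξ η).mpr (h1 _ ⟨F, hF, rfl⟩)
    · intro H hH hall
      refine h2 H hH ?_
      rintro φ ⟨F, hF, rfl⟩
      exact (htSat_iff_prop symv H J F ξ η).mp (hall F hF)
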